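/- Local complementation preserves connectivity: for any undirected irreflexive graph G and vertex u, two vertices a and b are in the same connected component of G if and only if they are in the same connected component of G ⋆ u. -/

import Mathlib

/-- Local complementation of `G` about `u`: edges between distinct neighbours of `u`
are complemented, all other adjacencies preserved. -/
def localComp {V : Type*} (G : SimpleGraph V) (u : V) : SimpleGraph V where
  Adj a b := (G.Adj a b ∧ ¬(G.Adj u a ∧ G.Adj u b ∧ a ≠ b)) ∨
             (¬ G.Adj a b ∧ (G.Adj u a ∧ G.Adj u b ∧ a ≠ b))
  symm := by
    refine ⟨?_⟩
    intro a b h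
    rcases h with ⟨h1, h2⟩ | ⟨h1, h2, h3, h4⟩
    · exact Or.inl ⟨h1.symm, fun ⟨x, y, z⟩ => h2 ⟨y, x, z.symm⟩⟩
    · exact Or.inr ⟨fun hc => h1 hc.symm, h3, h2, h4.symm⟩
  loopless := by
    refine ⟨?_⟩
    intro a h
    rcases h with ⟨h1, _⟩ | ⟨_, _, _, h4⟩
    · exact G.loopless.irrefl a h1
    · exact h4 rfl

/-!
An edge `xy` of `G` that disappears in `G ⋆ u` joins two neighbours of `u`, and the
neighbourhood of `u` itself is unchanged, so `x - u - y` is a path in `G ⋆ u`.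
Conversely an edge of `G ⋆ u` missing from `G` joins two neighbours of `u`, hence
`x - u - y` is a path in `G`. So each graph's edges lie inside the other's components.
-/

namespace SimpleGraph

variable {V : Type*}

theorem reachable_le_of_adj_le_reachable {G H : SimpleGraph V} (h : G.Adj ≤ H.Reachable) :
    G.Reachable ≤ H.Reachable := by
  simp only [reachable_eq_reflTransGen] at h ⊢
  exact Relation.reflTransGen_closed h

end SimpleGraph

section LocalComp

open SimpleGraph

variable {V : Type*} (G : SimpleGraph V) (u : V)

theorem localComp_adj_center_iff {x : V} : (localComp G u).Adj u x ↔ G.Adj u x := by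
  have hu : ¬G.Adj u u := G.loopless.irrefl u
  simp only [localComp]
  tauto

theorem adj_le_reachable_localComp : G.Adj ≤ (localComp G u).Reachable := by
  intro x y hxy
  by_cases hnbr : G.Adj u x ∧ G.Adj u y ∧ x ≠ y
  · have hux := (localComp_adj_center_iff G u).2 hnbr.1
    have huy := (localComp_adj_center_iff G u).2 hnbr.2.1
    exact hux.symm.reachable.trans huy.reachable
  · exact Adj.reachable (Or.inl ⟨hxy, hnbr⟩)

theorem localComp_adj_le_reachable : (localComp G u).Adj ≤ G.Reachable := by
  rintro x y (⟨hxy, -⟩ | ⟨-, hux, huy, -⟩)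
  · exact hxy.reachable
  · exact hux.symm.reachable.trans huy.reachable

end LocalComp

/-- Local complementation preserves connectivity: a and b are connected in G iff
they are connected in G ⋆ u. -/
theorem localComp_reachable_iff {V : Type*} (G : SimpleGraph V) (u : V) (a b : V) :
    G.Reachable a b ↔ (localComp G u).Reachable a b :=
  ⟨SimpleGraph.reachable_le_of_adj_le_reachable (adj_le_reachable_localComp G u) a b,
    SimpleGraph.reachable_le_of_adj_le_reachable (localComp_adj_le_reachable G u) a b⟩
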